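/- Let X be a random variable (continuous or discrete), Y a random variable with finite outcome set 𝒴, and suppose Y = f(X) for a single-valued function f. Then for every β ∈ [0,1] and every discrete random variable T satisfying the Markov condition Y − X − T, the dIB Lagrangian obeys I(Y;T) − β·H(T) ≤ (1−β)·H(Y), and the bottleneck variable T_copy := f(X) = Y achieves equality; hence T_copy maximizes the dIB Lagrangian simultaneously for all β ∈ [0,1]. -/
import Mathlib


noncomputable section

/-- `p` is a joint probability distribution on the finite product `A × B`. -/
def IsJoint {A B : Type*} [Fintype A] [Fintype B] (p : A → B → ℝ) : Prop :=
  (∀ a b, 0 ≤ p a b) ∧ (∑ a, ∑ b, p a b) = 1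

/-- `κ` is a channel (conditional distribution) from `A` to the finite type `B`. -/
def IsChannel {A B : Type*} [Fintype B] (κ : A → B → ℝ) : Prop :=
  ∀ a, (∀ b, 0 ≤ κ a b) ∧ (∑ b, κ a b) = 1

/-- Marginal distribution of the first coordinate. -/
def margFst {A B : Type*} [Fintype B] (p : A → B → ℝ) : A → ℝ := fun a => ∑ b, p a b

/-- Marginal distribution of the second coordinate. -/
def margSnd {A B : Type*} [Fintype A] (p : A → B → ℝ) : B → ℝ := fun b => ∑ a, p a b

/-- ℓ1 distance between two joint distributions. -/
def l1 {A B : Type*} [Fintype A] [Fintype B] (p q : A → B → ℝ) : ℝ :=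
  ∑ a, ∑ b, |p a b - q a b|

/-- Shannon entropy of a distribution on a finite type. -/
def ent {A : Type*} [Fintype A] (q : A → ℝ) : ℝ := -∑ a, q a * Real.log (q a)

/-- Conditional entropy `H(B | A)` of the second coordinate given the first. -/
def condEnt {A B : Type*} [Fintype A] [Fintype B] (p : A → B → ℝ) : ℝ :=
  -∑ a, ∑ b, p a b * Real.log (p a b / margFst p a)

/-- Mutual information `I(A;B)` of a joint distribution, as `H(B) - H(B|A)`. -/
def mi {A B : Type*} [Fintype A] [Fintype B] (p : A → B → ℝ) : ℝ :=
  ent (margSnd p) - condEnt p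

/-- Joint distribution of `(X,T)` when `T` is generated from `X` via channel `κ`
(so that the Markov condition `Y - X - T` holds). -/
def jointXT {X Y T : Type*} [Fintype Y] (p : X → Y → ℝ) (κ : X → T → ℝ) : X → T → ℝ :=
  fun x t => (∑ y, p x y) * κ x t

/-- Joint distribution of `(T,Y)` when `T` is generated from `X` via channel `κ`. -/
def jointTY {X Y T : Type*} [Fintype X] (p : X → Y → ℝ) (κ : X → T → ℝ) : T → Y → ℝ :=
  fun t y => ∑ x, p x y * κ x t

/-- Joint distribution of `(Y,T)` when `T` is generated from `X` via channel `κ`. -/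
def jointYT {X Y T : Type*} [Fintype X] (p : X → Y → ℝ) (κ : X → T → ℝ) : Y → T → ℝ :=
  fun y t => ∑ x, p x y * κ x t

/-- The information-bottleneck curve `F(r)`: the supremum of `I(Y;T)` over all (discrete)
bottleneck variables `T` obeying the Markov condition `Y - X - T` with `I(X;T) ≤ r`. -/
def IBcurve {X Y : Type*} [Fintype X] [Fintype Y] (p : X → Y → ℝ) (r : ℝ) : ℝ :=
  sSup { v : ℝ | ∃ (n : ℕ) (κ : X → Fin n → ℝ), IsChannel κ ∧
    mi (jointXT p κ) ≤ r ∧ v = mi (jointTY p κ) }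

/-- `Y` is the deterministic function `f` of `X` under the joint distribution `p`:
given `X = x`, all conditional mass is on `f x`. -/
def Determ {X Y : Type*} (p : X → Y → ℝ) (f : X → Y) : Prop :=
  ∀ x y, y ≠ f x → p x y = 0

lemma condEnt_nonneg {A B : Type*} [Fintype A] [Fintype B] (q : A → B → ℝ)
    (hq : ∀ a b, 0 ≤ q a b) : 0 ≤ condEnt q := by
  unfold condEnt
  rw [neg_nonneg]
  apply Finset.sum_nonpos
  intro a _
  apply Finset.sum_nonpos
  intro b _
  rcases eq_or_lt_of_le (hq a b) with h | h
  · rw [← h]; simp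
  · have hm : 0 < margFst q a :=
      lt_of_lt_of_le h (Finset.single_le_sum (fun b' _ => hq a b') (Finset.mem_univ b))
    exact mul_nonpos_of_nonneg_of_nonpos (hq a b)
      (Real.log_nonpos (div_nonneg (hq a b) hm.le)
        ((div_le_one hm).2 (Finset.single_le_sum (fun b' _ => hq a b') (Finset.mem_univ b))))

lemma mi_le_ent_margSnd {A B : Type*} [Fintype A] [Fintype B] (q : A → B → ℝ)
    (hq : ∀ a b, 0 ≤ q a b) : mi q ≤ ent (margSnd q) := by
  have := condEnt_nonneg q hq
  unfold mi; linarith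

lemma mi_le_ent_margFst {A B : Type*} [Fintype A] [Fintype B] (q : A → B → ℝ)
    (hq : ∀ a b, 0 ≤ q a b) : mi q ≤ ent (margFst q) := by
  have key : mi q - ent (margFst q) = ∑ a, ∑ b, q a b * Real.log (q a b / margSnd q b) := by
    have h1 : ent (margSnd q) = -∑ a, ∑ b, q a b * Real.log (margSnd q b) := by
      rw [Finset.sum_comm]
      unfold ent
      congr 1
      refine Finset.sum_congr rfl fun b _ => ?_
      show margSnd q b * _ = _
      rw [margSnd, Finset.sum_mul]
    have h2 : ent (margFst q) = -∑ a, ∑ b, q a b * Real.log (margFst q a) := by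
      unfold ent
      congr 1
      refine Finset.sum_congr rfl fun a _ => ?_
      show margFst q a * _ = _
      rw [margFst, Finset.sum_mul]
    unfold mi condEnt
    rw [h1, h2]
    rw [show ∀ x y z : ℝ, -x - -y - -z = y + z - x from fun x y z => by ring]
    rw [← Finset.sum_add_distrib, ← Finset.sum_sub_distrib]
    refine Finset.sum_congr rfl fun a _ => ?_
    rw [← Finset.sum_add_distrib, ← Finset.sum_sub_distrib]
    refine Finset.sum_congr rfl fun b _ => ?_
    rcases eq_or_lt_of_le (hq a b) with h | h
    · rw [← h]; ring
    · have hA : 0 < margFst q a :=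
        lt_of_lt_of_le h (Finset.single_le_sum (fun b' _ => hq a b') (Finset.mem_univ b))
      have hB : 0 < margSnd q b :=
        lt_of_lt_of_le h (Finset.single_le_sum (fun a' _ => hq a' b) (Finset.mem_univ a))
      rw [Real.log_div h.ne' hA.ne', Real.log_div h.ne' hB.ne']
      ring
  have h0 : ∑ a, ∑ b, q a b * Real.log (q a b / margSnd q b) ≤ 0 := by
    apply Finset.sum_nonpos
    intro a _
    apply Finset.sum_nonpos
    intro b _
    rcases eq_or_lt_of_le (hq a b) with h | h
    · rw [← h]; simp
    · have hB : 0 < margSnd q b :=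
        lt_of_lt_of_le h (Finset.single_le_sum (fun a' _ => hq a' b) (Finset.mem_univ a))
      exact mul_nonpos_of_nonneg_of_nonpos (hq a b)
        (Real.log_nonpos (div_nonneg (hq a b) hB.le)
          ((div_le_one hB).2 (Finset.single_le_sum (fun a' _ => hq a' b) (Finset.mem_univ a))))
  linarith

/-- Suppose `Y = f(X)` (with `Y` finite).  Then for every `β ∈ [0,1]` and
every discrete bottleneck variable `T` satisfying the Markov condition `Y - X - T` (i.e.
given by a channel `κ` from `X` to a finite type `T`), the dIB Lagrangian obeys
`I(Y;T) - β H(T) ≤ (1-β) H(Y)`; and the copy variable `T_copy := f(X) = Y` achieves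
equality, hence maximizes the dIB Lagrangian simultaneously for all `β ∈ [0,1]`. -/
theorem copy_maximizes_dIB_Lagrangian {X Y : Type*} [Fintype X] [Fintype Y] [DecidableEq Y]
    (p : X → Y → ℝ) (f : X → Y)
    (hp : IsJoint p) (hdet : Determ p f) :
    ∀ β ∈ Set.Icc (0:ℝ) 1,
      (∀ (T : Type) [Fintype T] (κ : X → T → ℝ), IsChannel κ →
        mi (jointYT p κ) - β * ent (margSnd (jointXT p κ)) ≤ (1 - β) * ent (margSnd p)) ∧
      mi (jointYT p (fun x t => if t = f x then (1:ℝ) else 0)) -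
        β * ent (margSnd (jointXT p (fun x t => if t = f x then (1:ℝ) else 0))) =
          (1 - β) * ent (margSnd p) := by
  obtain ⟨hpn, hps⟩ := hp
  intro β hβ
  obtain ⟨hβ0, hβ1⟩ := hβ
  constructor
  · intro T _ κ hκ
    have hqn : ∀ y t, 0 ≤ jointYT p κ y t := fun y t =>
      Finset.sum_nonneg fun x _ => mul_nonneg (hpn x y) ((hκ x).1 t)
    have hfst : margFst (jointYT p κ) = margSnd p := by
      funext y
      show ∑ t, ∑ x, p x y * κ x t = ∑ x, p x y
      rw [Finset.sum_comm]
      refine Finset.sum_congr rfl fun x _ => ?_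
      rw [← Finset.mul_sum, (hκ x).2, mul_one]
    have hsnd : margSnd (jointXT p κ) = margSnd (jointYT p κ) := by
      funext t
      show ∑ x, (∑ y, p x y) * κ x t = ∑ y, ∑ x, p x y * κ x t
      rw [Finset.sum_comm]
      refine Finset.sum_congr rfl fun x _ => ?_
      rw [Finset.sum_mul]
    have h1 : mi (jointYT p κ) ≤ ent (margSnd p) := by
      have := mi_le_ent_margFst (jointYT p κ) hqn
      rwa [hfst] at this
    have h2 : mi (jointYT p κ) ≤ ent (margSnd (jointYT p κ)) := mi_le_ent_margSnd _ hqn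
    rw [hsnd]
    nlinarith [mul_nonneg (by linarith : (0:ℝ) ≤ 1 - β) (sub_nonneg.2 h1),
      mul_nonneg hβ0 (sub_nonneg.2 h2)]
  · set κ₀ : X → Y → ℝ := fun x t => if t = f x then (1:ℝ) else 0 with hκ₀
    have h1 : ∀ y t, jointYT p κ₀ y t = if t = y then margSnd p y else 0 := by
      intro y t
      show ∑ x, p x y * (if t = f x then (1:ℝ) else 0) = _
      by_cases hty : t = y
      · subst hty
        rw [if_pos rfl]
        show _ = ∑ x, p x t
        refine Finset.sum_congr rfl fun x _ => ?_
        by_cases hfx : t = f x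
        · rw [if_pos hfx, mul_one]
        · rw [hdet x t hfx]; ring
      · rw [if_neg hty]
        apply Finset.sum_eq_zero
        intro x _
        by_cases hfx : t = f x
        · have : y ≠ f x := fun h => hty (hfx.trans h.symm)
          rw [hdet x y this, zero_mul]
        · rw [if_neg hfx, mul_zero]
    have hXT : margSnd (jointXT p κ₀) = margSnd p := by
      funext t
      show ∑ x, (∑ y, p x y) * (if t = f x then (1:ℝ) else 0) = ∑ x, p x t
      refine Finset.sum_congr rfl fun x _ => ?_
      by_cases hfx : t = f x
      · rw [if_pos hfx, mul_one, hfx]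
        exact Finset.sum_eq_single (f x) (fun y _ hy => hdet x y hy)
          (fun h => absurd (Finset.mem_univ _) h)
      · rw [if_neg hfx, mul_zero, hdet x t hfx]
    have hSnd : margSnd (jointYT p κ₀) = margSnd p := by
      funext t
      show ∑ y, jointYT p κ₀ y t = _
      simp only [h1]
      simp [Finset.sum_ite_eq]
    have hFst : margFst (jointYT p κ₀) = margSnd p := by
      funext y
      show ∑ t, jointYT p κ₀ y t = _
      simp only [h1]
      simp [Finset.sum_ite_eq']
    have hCond : condEnt (jointYT p κ₀) = 0 := by
      unfold condEnt
      rw [neg_eq_zero]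
      apply Finset.sum_eq_zero
      intro y _
      apply Finset.sum_eq_zero
      intro t _
      rw [h1, hFst]
      by_cases hty : t = y
      · rw [if_pos hty]
        rcases eq_or_ne (margSnd p y) 0 with h | h
        · rw [h]; simp
        · rw [div_self h, Real.log_one, mul_zero]
      · rw [if_neg hty, zero_mul]
    show mi (jointYT p κ₀) - β * ent (margSnd (jointXT p κ₀)) = _
    rw [hXT]
    unfold mi
    rw [hSnd, hCond]
    ring
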